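/- arXiv:2407.00457 — 2 statements merged into one kernel-verified Lean document; each statement's English description precedes it below -/
import Mathlib

section
/- Let n ≥ 1 be a natural number, let a and d be real numbers with a > d ≥ 0, let b ∈ (0,∞), and let α_1, …, α_n ∈ [0, π). Suppose u_1, …, u_n and v_1, …, v_n are complex numbers with |u_j − a| ≤ d and |v_j − a| ≤ d for every j, and set w = Σ_{j=1}^n u_j/(1 + b e^{iα_j}) + Σ_{j=1}^n v_j/(1 + b^{-1} e^{-iα_j}). Then n·a − d · Σ_{j=1}^n (1 + b)/√(1 + 2b cos α_j + b²) ≤ Re(w) ≤ n·a + d · Σ_{j=1}^n (1 + b)/√(1 + 2b cos α_j + b²). -/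
/-!
Put `z_j = b e^{iα_j}`, so that the second denominator is `1 + z_j⁻¹`. Since
`1/(1 + z⁻¹) = z/(1 + z)` and `1/(1 + z) + z/(1 + z) = 1`, the `j`-th pair of summands
equals `a` plus `(u_j - a)/(1 + z_j) + (v_j - a) z_j/(1 + z_j)`, whose modulus is at most
`d (1 + b)/|1 + z_j|`, and `|1 + z_j|² = 1 + 2b cos α_j + b²`.
-/

open Real Finset

theorem inv_one_add_inv {K : Type*} [Field K] {z : K} (hz : z ≠ 0) :
    (1 + z⁻¹)⁻¹ = z / (1 + z) := by
  rw [← inv_div, add_div, div_self hz, one_div, add_comm]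

theorem norm_div_one_add_add_div_one_add_inv_sub_le {K : Type*} [NormedField K]
    {u v c z : K} {d : ℝ} (hz : z ≠ 0) (hz1 : 1 + z ≠ 0) (hu : ‖u - c‖ ≤ d)
    (hv : ‖v - c‖ ≤ d) :
    ‖u / (1 + z) + v / (1 + z⁻¹) - c‖ ≤ d * (1 + ‖z‖) / ‖1 + z‖ := by
  have hsplit : u / (1 + z) + v / (1 + z⁻¹) - c = (u - c) / (1 + z) + (v - c) * z / (1 + z) := by
    rw [div_eq_mul_inv v, inv_one_add_inv hz]
    field_simp
    ring
  rw [hsplit, mul_add, mul_one, add_div]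
  refine (norm_add_le _ _).trans (add_le_add ?_ ?_)
  · rw [norm_div]
    gcongr
  · rw [norm_div, norm_mul]
    gcongr

theorem Complex.norm_one_add_ofReal_mul_exp_I_mul (b θ : ℝ) :
    ‖1 + (b : ℂ) * Complex.exp (Complex.I * θ)‖ = √(1 + 2 * b * Real.cos θ + b ^ 2) := by
  rw [Complex.norm_def, mul_comm Complex.I, Complex.exp_mul_I, ← Complex.ofReal_cos,
    ← Complex.ofReal_sin]
  congr 1
  simp only [Complex.normSq_apply, Complex.add_re, Complex.add_im, Complex.mul_re, Complex.mul_im,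
    Complex.ofReal_re, Complex.ofReal_im, Complex.I_re, Complex.I_im, Complex.one_re,
    Complex.one_im]
  linear_combination b ^ 2 * Real.sin_sq_add_cos_sq θ

theorem one_add_two_mul_mul_cos_add_sq_pos {b θ : ℝ} (hb : 0 < b) (hθ : θ ∈ Set.Ico 0 π) :
    0 < 1 + 2 * b * Real.cos θ + b ^ 2 := by
  have hcos : -1 < Real.cos θ := by
    simpa using Real.cos_lt_cos_of_nonneg_of_le_pi hθ.1 le_rfl hθ.2
  nlinarith [sq_nonneg (1 - b)]

theorem stmt_4_general (n : ℕ) (a d b : ℝ)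
    (hb : 0 < b)
    (α : Fin n → ℝ) (hα : ∀ j, α j ∈ Set.Ico (0 : ℝ) π)
    (u v : Fin n → ℂ)
    (hu : ∀ j, ‖u j - (a : ℂ)‖ ≤ d)
    (hv : ∀ j, ‖v j - (a : ℂ)‖ ≤ d)
    (w : ℂ)
    (hw : w = ∑ j, u j / (1 + (b : ℂ) * Complex.exp (Complex.I * (α j : ℂ)))
            + ∑ j, v j / (1 + (b : ℂ)⁻¹ * Complex.exp (-(Complex.I * (α j : ℂ))))) :
    n * a - d * ∑ j, (1 + b) / Real.sqrt (1 + 2 * b * Real.cos (α j) + b ^ 2) ≤ w.re ∧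
      w.re ≤ n * a + d * ∑ j, (1 + b) / Real.sqrt (1 + 2 * b * Real.cos (α j) + b ^ 2) := by
  set z : Fin n → ℂ := fun j => (b : ℂ) * Complex.exp (Complex.I * (α j : ℂ))
  have hz : ∀ j, z j ≠ 0 := fun j =>
    mul_ne_zero (by exact_mod_cast hb.ne') (Complex.exp_ne_zero _)
  have hnorm_z : ∀ j, ‖z j‖ = b := fun j => by
    rw [norm_mul, mul_comm Complex.I, Complex.norm_exp_ofReal_mul_I, Complex.norm_real,
      Real.norm_of_nonneg hb.le, mul_one]
  have hnorm_one_add : ∀ j, ‖1 + z j‖ = √(1 + 2 * b * Real.cos (α j) + b ^ 2) := fun j =>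
    Complex.norm_one_add_ofReal_mul_exp_I_mul b (α j)
  have hz1 : ∀ j, 1 + z j ≠ 0 := fun j => norm_pos_iff.mp <| by
    rw [hnorm_one_add]
    exact Real.sqrt_pos.mpr (one_add_two_mul_mul_cos_add_sq_pos hb (hα j))
  have hw_sub : w - (n * a : ℝ) = ∑ j, (u j / (1 + z j) + v j / (1 + (z j)⁻¹) - a) := by
    simp only [hw, z, mul_inv, ← Complex.exp_neg, sum_sub_distrib, sum_add_distrib, sum_const,
      card_univ, Fintype.card_fin, nsmul_eq_mul]
    push_cast
    ring
  have hbound :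
      ‖w - (n * a : ℝ)‖ ≤ d * ∑ j, (1 + b) / √(1 + 2 * b * Real.cos (α j) + b ^ 2) := by
    rw [hw_sub, mul_sum]
    refine (norm_sum_le _ _).trans (sum_le_sum fun j _ => ?_)
    refine (norm_div_one_add_add_div_one_add_inv_sub_le (hz j) (hz1 j) (hu j) (hv j)).trans_eq ?_
    rw [hnorm_z, hnorm_one_add, mul_div_assoc]
  have hre := (Complex.abs_re_le_norm _).trans hbound
  rw [Complex.sub_re, Complex.ofReal_re, abs_le] at hre
  constructor <;> linarith [hre.1, hre.2]

/-- intermediate two-sided bound for the combination `w` in terms of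
`(1 + b)/√(1 + 2 b cos α_j + b²)`. -/
theorem stmt_4 (n : ℕ) (hn : 1 ≤ n) (a d b : ℝ)
    (had : a > d) (hd : 0 ≤ d) (hb : 0 < b)
    (α : Fin n → ℝ) (hα : ∀ j, α j ∈ Set.Ico (0 : ℝ) π)
    (u v : Fin n → ℂ)
    (hu : ∀ j, ‖u j - (a : ℂ)‖ ≤ d)
    (hv : ∀ j, ‖v j - (a : ℂ)‖ ≤ d)
    (w : ℂ)
    (hw : w = ∑ j, u j / (1 + (b : ℂ) * Complex.exp (Complex.I * (α j : ℂ)))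
            + ∑ j, v j / (1 + (b : ℂ)⁻¹ * Complex.exp (-(Complex.I * (α j : ℂ))))) :
    n * a - d * ∑ j, (1 + b) / Real.sqrt (1 + 2 * b * Real.cos (α j) + b ^ 2) ≤ w.re ∧
      w.re ≤ n * a + d * ∑ j, (1 + b) / Real.sqrt (1 + 2 * b * Real.cos (α j) + b ^ 2) :=
  stmt_4_general n a d b hb α hα u v hu hv w hw
end

section
/- Let n ≥ 1, let A ∈ (1, 2], let α_1, …, α_n ∈ [0, π), and set S = Σ_{j=1}^n sec(α_j/2). Define ψ(r) = ((A + 3 − 4n)/(A − 1)) r² − (2/(A − 1)) (A + 1 + 2AS) r + 1, and let R be the smallest zero of ψ in (0, 1) (such a zero exists). Let F be analytic on the open unit disk D with F′(z) ≠ 0 for all z ∈ D, and suppose that for every z ∈ D with |z| = r there exist b ∈ (0,∞) and complex numbers u_1, …, u_n, v_1, …, v_n satisfying |u_j − 2r²/(1 − r²)| ≤ 2Ar/(1 − r²) and |v_j − 2r²/(1 − r²)| ≤ 2Ar/(1 − r²) for every j, such that z F″(z)/F′(z) = Σ_{j=1}^n u_j/(1 + b e^{iα_j}) + Σ_{j=1}^n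 v_j/(1 + b^{-1} e^{-iα_j}). Then Re T_F(z) > 0 for all z with |z| < R. -/
open Real Finset

/-!
Write `w_j = 1 + b e^{iα_j}`. Since `b⁻¹ e^{-iα_j} = (b e^{iα_j})⁻¹`, the `j`-th pair of terms
of the decomposition is `u_j w_j⁻¹ + v_j (1 - w_j⁻¹)`. Centring `u_j, v_j` at `m = 2r²/(1-r²)`
bounds its real part by `m + K (‖w_j⁻¹‖ + ‖1 - w_j⁻¹‖)` with `K = 2Ar/(1-r²)`, and
`‖w_j‖ ≥ (1+b) cos(α_j/2)` bounds the bracket by `sec(α_j/2)`. Together with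
`Re((1+z)/(1-z)) ≥ (1-r)/(1+r)` this gives `Re T_F(z) ≥ ψ(r)/(1-r²)`, which is positive for
`r < R` since `ψ(0) = 1` and `R` is the first zero of `ψ`.
-/

theorem norm_one_add_mul_exp_sq (b a : ℝ) :
    ‖1 + (b : ℂ) * Complex.exp (Complex.I * a)‖ ^ 2 = (1 - b) ^ 2 + 2 * b * (1 + Real.cos a) := by
  have hw : 1 + (b : ℂ) * Complex.exp (Complex.I * a)
      = ((1 + b * Real.cos a : ℝ) : ℂ) + ((b * Real.sin a : ℝ) : ℂ) * Complex.I := by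
    rw [mul_comm Complex.I, Complex.exp_mul_I, ← Complex.ofReal_cos, ← Complex.ofReal_sin]
    push_cast; ring
  rw [hw, Complex.sq_norm, Complex.normSq_add_mul_I]
  linear_combination b ^ 2 * Real.sin_sq_add_cos_sq a

theorem mul_cos_half_le_norm_one_add_mul_exp {b a : ℝ} (ha : a ∈ Set.Ico 0 π) :
    (1 + b) * Real.cos (a / 2) ≤ ‖1 + (b : ℂ) * Complex.exp (Complex.I * a)‖ := by
  have hcos : 0 ≤ Real.cos (a / 2) :=
    Real.cos_nonneg_of_mem_Icc ⟨by linarith [Real.pi_pos, ha.1], by linarith [ha.2]⟩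
  refine abs_le_of_sq_le_sq' ?_ (norm_nonneg _) |>.2
  -- `‖1 + b e^{ia}‖² - (1 + b)² cos²(a/2) = (1 - b)² (1 - cos a) / 2`
  rw [norm_one_add_mul_exp_sq, mul_pow, Real.cos_sq, mul_div_cancel₀ a two_ne_zero]
  nlinarith [mul_nonneg (sq_nonneg (1 - b)) (sub_nonneg.2 (Real.cos_le_one a))]

theorem one_add_mul_exp_ne_zero {b a : ℝ} (hb : 0 ≤ b) (ha : a ∈ Set.Ico 0 π) :
    1 + (b : ℂ) * Complex.exp (Complex.I * a) ≠ 0 := by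
  have hcos : 0 < Real.cos (a / 2) :=
    Real.cos_pos_of_mem_Ioo ⟨by linarith [Real.pi_pos, ha.1], by linarith [ha.2]⟩
  rw [← norm_pos_iff]
  exact lt_of_lt_of_le (by positivity) (mul_cos_half_le_norm_one_add_mul_exp ha)

theorem norm_inv_add_norm_one_sub_inv_le {b a : ℝ} (hb : 0 ≤ b) (ha : a ∈ Set.Ico 0 π) :
    ‖(1 + (b : ℂ) * Complex.exp (Complex.I * a))⁻¹‖
      + ‖1 - (1 + (b : ℂ) * Complex.exp (Complex.I * a))⁻¹‖ ≤ 1 / Real.cos (a / 2) := by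
  set w := 1 + (b : ℂ) * Complex.exp (Complex.I * a) with hw
  have hw0 : w ≠ 0 := one_add_mul_exp_ne_zero hb ha
  have hcos : 0 < Real.cos (a / 2) :=
    Real.cos_pos_of_mem_Ioo ⟨by linarith [Real.pi_pos, ha.1], by linarith [ha.2]⟩
  have hsub : 1 - w⁻¹ = b * Complex.exp (Complex.I * a) / w := by
    field_simp; rw [hw]; ring
  have hnorm_exp : ‖Complex.exp (Complex.I * a)‖ = 1 := by
    rw [mul_comm]; exact Complex.norm_exp_ofReal_mul_I a
  rw [hsub, norm_div, norm_mul, hnorm_exp, Complex.norm_real, Real.norm_of_nonneg hb, mul_one,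
    norm_inv, ← one_div, ← add_div, div_le_div_iff₀ (norm_pos_iff.2 hw0) hcos, one_mul]
  exact mul_cos_half_le_norm_one_add_mul_exp ha

theorem inv_one_add_inv_s10 {c : ℂ} (hc : c ≠ 0) (hc1 : 1 + c ≠ 0) :
    (1 + c⁻¹)⁻¹ = 1 - (1 + c)⁻¹ := by
  grind

theorem one_sub_norm_div_le_re_cayley {z : ℂ} (hz : ‖z‖ < 1) :
    (1 - ‖z‖) / (1 + ‖z‖) ≤ ((1 + z) / (1 - z)).re := by
  have hz1 : 0 < Complex.normSq (1 - z) := by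
    refine Complex.normSq_pos.2 (sub_ne_zero.2 ?_)
    rintro rfl; simp at hz
  have hre : ((1 + z) / (1 - z)).re = (1 - ‖z‖ ^ 2) / Complex.normSq (1 - z) := by
    rw [Complex.div_re, ← add_div, Complex.sq_norm, Complex.normSq_apply z]
    congr 1; simp; ring
  have hnormSq : Complex.normSq (1 - z) ≤ (1 + ‖z‖) ^ 2 := by
    rw [← Complex.sq_norm]
    gcongr
    exact (norm_sub_le _ _).trans (by simp)
  calc (1 - ‖z‖) / (1 + ‖z‖) = (1 - ‖z‖ ^ 2) / (1 + ‖z‖) ^ 2 := by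
        field_simp; ring
    _ ≤ _ := by
        rw [hre]
        exact div_le_div_of_nonneg_left (by nlinarith [norm_nonneg z]) hz1 hnormSq

theorem re_mul_add_mul_one_sub_le {u v c : ℂ} {m K : ℝ}
    (hu : ‖u - m‖ ≤ K) (hv : ‖v - m‖ ≤ K) :
    (u * c + v * (1 - c)).re ≤ m + K * (‖c‖ + ‖1 - c‖) := by
  have hsplit : u * c + v * (1 - c) = m + ((u - m) * c + (v - m) * (1 - c)) := by ring
  calc (u * c + v * (1 - c)).re
      = m + ((u - m) * c + (v - m) * (1 - c)).re := by
        rw [hsplit, Complex.add_re, Complex.ofReal_re]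
    _ ≤ m + (‖u - m‖ * ‖c‖ + ‖v - m‖ * ‖1 - c‖) := by
        grw [Complex.re_le_norm, norm_add_le, norm_mul, norm_mul]
    _ ≤ m + K * (‖c‖ + ‖1 - c‖) := by
        grw [hu, hv, mul_add]

theorem re_sum_div_add_sum_div_le {ι : Type*} [Fintype ι] {α : ι → ℝ}
    (hα : ∀ j, α j ∈ Set.Ico 0 π) {b m K : ℝ} (hb : 0 < b) (hK : 0 ≤ K) {u v : ι → ℂ}
    (hu : ∀ j, ‖u j - m‖ ≤ K) (hv : ∀ j, ‖v j - m‖ ≤ K) :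
    (∑ j, u j / (1 + (b : ℂ) * Complex.exp (Complex.I * α j))
      + ∑ j, v j / (1 + (b : ℂ)⁻¹ * Complex.exp (-(Complex.I * α j)))).re
      ≤ Fintype.card ι * m + K * ∑ j, 1 / Real.cos (α j / 2) := by
  rw [← Finset.sum_add_distrib, Complex.re_sum, Finset.mul_sum, ← nsmul_eq_mul,
    ← Finset.card_univ, ← Finset.sum_const, ← Finset.sum_add_distrib]
  refine Finset.sum_le_sum fun j _ => ?_
  have hdual : 1 + (b : ℂ)⁻¹ * Complex.exp (-(Complex.I * α j))
      = 1 + ((b : ℂ) * Complex.exp (Complex.I * α j))⁻¹ := by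
    rw [Complex.exp_neg, mul_inv]
  rw [hdual, div_eq_mul_inv, div_eq_mul_inv,
    inv_one_add_inv_s10 (by simp [hb.ne']) (one_add_mul_exp_ne_zero hb.le (hα j))]
  grw [re_mul_add_mul_one_sub_le (hu j) (hv j), norm_inv_add_norm_one_sub_inv_le hb.le (hα j)]

theorem pos_of_lt_first_zero {ψ : ℝ → ℝ} (hψ : Continuous ψ) (hψ0 : 0 < ψ 0) {R : ℝ} (hR : R ≤ 1)
    (hRmin : ∀ r ∈ Set.Ioo (0 : ℝ) 1, ψ r = 0 → R ≤ r) {r : ℝ} (hr0 : 0 ≤ r) (hrR : r < R) :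
    0 < ψ r := by
  by_contra! hψr
  obtain ⟨c, hc, hψc⟩ := intermediate_value_Icc' hr0 hψ.continuousOn ⟨hψr, hψ0.le⟩
  have hc0 : c ≠ 0 := by rintro rfl; exact hψ0.ne' hψc
  linarith [hRmin c ⟨lt_of_le_of_ne hc.1 hc0.symm, by linarith [hc.2]⟩ hψc, hc.2]

theorem re_concavity_expr_pos {A : ℝ} (hA : 1 < A) {z Q : ℂ} {X : ℝ} (hz : ‖z‖ < 1)
    (hQ : Q.re ≤ X) (hX : 0 < (A + 1) / 2 * ((1 - ‖z‖) / (1 + ‖z‖)) - 1 - X) :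
    0 < (((2 : ℂ) / ((A : ℂ) - 1)) * (((A : ℂ) + 1) / 2 * (1 + z) / (1 - z) - 1 - Q)).re := by
  have hreal : ((2 : ℂ) / ((A : ℂ) - 1)) * (((A : ℂ) + 1) / 2 * (1 + z) / (1 - z) - 1 - Q)
      = ((2 / (A - 1) : ℝ) : ℂ) * ((((A + 1) / 2 : ℝ) : ℂ) * ((1 + z) / (1 - z)) - 1 - Q) := by
    push_cast; ring
  rw [hreal, Complex.re_ofReal_mul, Complex.sub_re, Complex.sub_re, Complex.re_ofReal_mul,
    Complex.one_re]
  have hcayley := mul_le_mul_of_nonneg_left (one_sub_norm_div_le_re_cayley hz)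
    (by linarith : 0 ≤ (A + 1) / 2)
  exact mul_pos (div_pos two_pos (by linarith)) (by linarith)

theorem concavity_margin_eq {A r : ℝ} (hA : 1 < A) (hr0 : 0 ≤ r) (hr : r < 1) (n S : ℝ) :
    (A + 1) / 2 * ((1 - r) / (1 + r)) - 1
        - (n * (2 * r ^ 2 / (1 - r ^ 2)) + 2 * A * r / (1 - r ^ 2) * S)
      = (A - 1) / (2 * (1 - r ^ 2)) * (((A + 3 - 4 * n) / (A - 1)) * r ^ 2
        - (2 / (A - 1)) * (A + 1 + 2 * A * S) * r + 1) := by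
  have h1 : A - 1 ≠ 0 := by linarith
  have h2 : 1 - r ^ 2 ≠ 0 := by nlinarith
  have h3 : 1 + r ≠ 0 := by linarith
  field_simp
  ring

theorem stmt_10_general (n : ℕ) (A : ℝ) (hA : A ∈ Set.Ioc (1 : ℝ) 2)
    (α : Fin n → ℝ) (hα : ∀ j, α j ∈ Set.Ico (0 : ℝ) π)
    (S : ℝ) (hS : S = ∑ j, 1 / Real.cos (α j / 2))
    (ψ : ℝ → ℝ)
    (hψ : ψ = fun r => ((A + 3 - 4 * n) / (A - 1)) * r ^ 2
        - (2 / (A - 1)) * (A + 1 + 2 * A * S) * r + 1)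
    (R : ℝ) (hR : R ∈ Set.Ioo (0 : ℝ) 1)
    (hRmin : ∀ r ∈ Set.Ioo (0 : ℝ) 1, ψ r = 0 → R ≤ r)
    (F : ℂ → ℂ)
    (hdec : ∀ z ∈ Metric.ball (0 : ℂ) 1, ∀ r : ℝ, r = ‖z‖ →
      ∃ b : ℝ, 0 < b ∧ ∃ u v : Fin n → ℂ,
        (∀ j, ‖u j - ((2 * r ^ 2 / (1 - r ^ 2) : ℝ) : ℂ)‖
            ≤ 2 * A * r / (1 - r ^ 2)) ∧
        (∀ j, ‖v j - ((2 * r ^ 2 / (1 - r ^ 2) : ℝ) : ℂ)‖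
            ≤ 2 * A * r / (1 - r ^ 2)) ∧
        z * deriv (deriv F) z / deriv F z
          = ∑ j, u j / (1 + (b : ℂ) * Complex.exp (Complex.I * (α j : ℂ)))
            + ∑ j, v j / (1 + (b : ℂ)⁻¹ * Complex.exp (-(Complex.I * (α j : ℂ))))) :
    ∀ z : ℂ, ‖z‖ < R →
      0 < (((2 : ℂ) / ((A : ℂ) - 1)) * (((A : ℂ) + 1) / 2 * (1 + z) / (1 - z) - 1
          - z * deriv (deriv F) z / deriv F z)).re := by
  intro z hzR
  have hz1 : ‖z‖ < 1 := hzR.trans hR.2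
  have hA0 : 0 < A := by linarith [hA.1]
  have h1z : 0 < 1 - ‖z‖ ^ 2 := by nlinarith [norm_nonneg z]
  obtain ⟨b, hb, u, v, hu, hv, hQ⟩ := hdec z (mem_ball_zero_iff.2 hz1) ‖z‖ rfl
  have hQre := re_sum_div_add_sum_div_le hα hb (by positivity) hu hv
  rw [← hQ, Fintype.card_fin, ← hS] at hQre
  refine re_concavity_expr_pos hA.1 hz1 hQre ?_
  rw [concavity_margin_eq hA.1 (norm_nonneg z) hz1]
  have hψz : 0 < ψ ‖z‖ :=
    pos_of_lt_first_zero (by rw [hψ]; fun_prop) (by simp [hψ]) hR.2.le hRmin (norm_nonneg z) hzR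
  rw [hψ] at hψz
  exact mul_pos (div_pos (by linarith [hA.1]) (by positivity)) hψz

/-- **Statement 6**: radius of concavity (w.r.t. `Co(A)`) for functions whose
logarithmic second-derivative expression decomposes as a combination of terms
satisfying the estimate valid for the class `Co(A)`. -/
theorem stmt_10 (n : ℕ) (hn : 1 ≤ n) (A : ℝ) (hA : A ∈ Set.Ioc (1 : ℝ) 2)
    (α : Fin n → ℝ) (hα : ∀ j, α j ∈ Set.Ico (0 : ℝ) π)
    (S : ℝ) (hS : S = ∑ j, 1 / Real.cos (α j / 2))
    (ψ : ℝ → ℝ)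
    (hψ : ψ = fun r => ((A + 3 - 4 * n) / (A - 1)) * r ^ 2
        - (2 / (A - 1)) * (A + 1 + 2 * A * S) * r + 1)
    (R : ℝ) (hR : R ∈ Set.Ioo (0 : ℝ) 1) (hRzero : ψ R = 0)
    (hRmin : ∀ r ∈ Set.Ioo (0 : ℝ) 1, ψ r = 0 → R ≤ r)
    (F : ℂ → ℂ) (hF : DifferentiableOn ℂ F (Metric.ball 0 1))
    (hF' : ∀ z ∈ Metric.ball (0 : ℂ) 1, deriv F z ≠ 0)
    (hdec : ∀ z ∈ Metric.ball (0 : ℂ) 1, ∀ r : ℝ, r = ‖z‖ →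
      ∃ b : ℝ, 0 < b ∧ ∃ u v : Fin n → ℂ,
        (∀ j, ‖u j - ((2 * r ^ 2 / (1 - r ^ 2) : ℝ) : ℂ)‖
            ≤ 2 * A * r / (1 - r ^ 2)) ∧
        (∀ j, ‖v j - ((2 * r ^ 2 / (1 - r ^ 2) : ℝ) : ℂ)‖
            ≤ 2 * A * r / (1 - r ^ 2)) ∧
        z * deriv (deriv F) z / deriv F z
          = ∑ j, u j / (1 + (b : ℂ) * Complex.exp (Complex.I * (α j : ℂ)))
            + ∑ j, v j / (1 + (b : ℂ)⁻¹ * Complex.exp (-(Complex.I * (α j : ℂ))))) :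
    ∀ z : ℂ, ‖z‖ < R →
      0 < (((2 : ℂ) / ((A : ℂ) - 1)) * (((A : ℂ) + 1) / 2 * (1 + z) / (1 - z) - 1
          - z * deriv (deriv F) z / deriv F z)).re :=
  stmt_10_general n A hA α hα S hS ψ hψ R hR hRmin F hdec
end
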